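/- arXiv:math/9812045 — 2 statements merged into one kernel-verified Lean document; each statement's English description precedes it below -/
import Mathlib

section
/- The map ρ: G → Diff(H) given by (ρ(p,q,r))(x,y,z) = (e^{-λr}x, e^{-λr}y, z + λe^{-λr}p·x - λe^{-λr}q·y - λe^{-2λr}η_λ(r)β(x,y)) defines a right action of the group G on the Heisenberg group H; that is, ρ(g'·g) = ρ(g) ∘ ρ(g') for g,g' ∈ G, and ρ of the identity is the identity map. -/
noncomputable section

/-- The standard inner product on `ℝⁿ`. -/
def beta {n : ℕ} (x y : Fin n → ℝ) : ℝ := ∑ i, x i * y i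

/-- `η_λ(r) = (e^{2λr}-1)/(2λ)`. -/
def eta (l r : ℝ) : ℝ := (Real.exp (2 * l * r) - 1) / (2 * l)

/-- Multiplication of `G`: `(p,q,r)(p',q',r') = (e^{λr'}p+p', e^{λr'}q+q', r+r')`. -/
def Gmul {n : ℕ} (l : ℝ) (a b : (Fin n → ℝ) × (Fin n → ℝ) × ℝ) :
    (Fin n → ℝ) × (Fin n → ℝ) × ℝ :=
  (Real.exp (l * b.2.2) • a.1 + b.1, Real.exp (l * b.2.2) • a.2.1 + b.2.1,
   a.2.2 + b.2.2)

/-- The dressing action of `G` on the Heisenberg group `H`: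
`(ρ(p,q,r))(x,y,z) = (e^{-λr}x, e^{-λr}y,
  z + λe^{-λr}p·x - λe^{-λr}q·y - λe^{-2λr}η_λ(r)β(x,y))`. -/
def rhoGH {n : ℕ} (l : ℝ) (g : (Fin n → ℝ) × (Fin n → ℝ) × ℝ)
    (h : (Fin n → ℝ) × (Fin n → ℝ) × ℝ) : (Fin n → ℝ) × (Fin n → ℝ) × ℝ :=
  (Real.exp (-(l * g.2.2)) • h.1, Real.exp (-(l * g.2.2)) • h.2.1,
   h.2.2 + l * Real.exp (-(l * g.2.2)) * beta g.1 h.1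
     - l * Real.exp (-(l * g.2.2)) * beta g.2.1 h.2.1
     - l * Real.exp (-(2 * (l * g.2.2))) * eta l g.2.2 * beta h.1 h.2.1)

lemma beta_smul_add {n : ℕ} (a : ℝ) (u v x : Fin n → ℝ) :
    beta (a • u + v) x = a * beta u x + beta v x := by
  simp [beta, Finset.mul_sum, ← Finset.sum_add_distrib, add_mul, mul_assoc]

lemma beta_smul_left {n : ℕ} (a : ℝ) (u x : Fin n → ℝ) :
    beta (a • u) x = a * beta u x := by
  simp [beta, Finset.mul_sum, mul_assoc]

lemma beta_smul_right {n : ℕ} (a : ℝ) (u x : Fin n → ℝ) :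
    beta u (a • x) = a * beta u x := by
  simp only [beta, Pi.smul_apply, smul_eq_mul, Finset.mul_sum]
  exact Finset.sum_congr rfl fun i _ => by ring

/-- The map `ρ : G → Diff(H)` defines a right action of the group `G` on the
Heisenberg group `H`: `ρ(g'·g) = ρ(g) ∘ ρ(g')`, and `ρ` of the identity is the
identity map. -/
theorem stmt_8 {n : ℕ} (l : ℝ) (hl : l ≠ 0) :
    (∀ g g' h : (Fin n → ℝ) × (Fin n → ℝ) × ℝ,
        rhoGH l (Gmul l g' g) h = rhoGH l g (rhoGH l g' h)) ∧
    (∀ h : (Fin n → ℝ) × (Fin n → ℝ) × ℝ,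
        rhoGH l ((0 : Fin n → ℝ), (0 : Fin n → ℝ), (0 : ℝ)) h = h) := by
  constructor
  · rintro ⟨p, q, r⟩ ⟨p', q', r'⟩ ⟨x, y, z⟩
    have e1 : Real.exp (-(l * (r' + r))) = Real.exp (-(l*r)) * Real.exp (-(l*r')) := by
      rw [← Real.exp_add]; ring_nf
    have e2 : Real.exp (-(2*(l * (r' + r)))) = Real.exp (-(2*(l*r))) * Real.exp (-(2*(l*r'))) := by
      rw [← Real.exp_add]; ring_nf
    have e3 : Real.exp (l*r) * Real.exp (-(l*r)) = 1 := by
      rw [← Real.exp_add]; simp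
    have e4 : ∀ s : ℝ, Real.exp (2*l*s) = Real.exp (l*s) * Real.exp (l*s) := by
      intro s; rw [← Real.exp_add]; ring_nf
    simp only [rhoGH, Gmul, Prod.mk.injEq, smul_smul, beta_smul_add, beta_smul_left,
      beta_smul_right, eta, e1, e2]
    refine ⟨trivial, trivial, ?_⟩
    have hA := (Real.exp_pos (l*r)).ne'
    have hB := (Real.exp_pos (l*r')).ne'
    rw [show Real.exp (-(l*r)) = (Real.exp (l*r))⁻¹ from Real.exp_neg _,
        show Real.exp (-(l*r')) = (Real.exp (l*r'))⁻¹ from Real.exp_neg _,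
        show Real.exp (-(2*(l*r))) = (Real.exp (l*r) * Real.exp (l*r))⁻¹ by
          rw [← Real.exp_add, ← Real.exp_neg]; ring_nf,
        show Real.exp (-(2*(l*r'))) = (Real.exp (l*r') * Real.exp (l*r'))⁻¹ by
          rw [← Real.exp_add, ← Real.exp_neg]; ring_nf,
        show Real.exp (2*l*(r'+r)) = Real.exp (l*r) * Real.exp (l*r) * (Real.exp (l*r') * Real.exp (l*r')) by
          rw [← Real.exp_add, ← Real.exp_add, ← Real.exp_add]; ring_nf,
        e4 r, e4 r']
    field_simp
    ring
  · rintro ⟨x, y, z⟩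
    simp [rhoGH, beta, eta]
end
end

section
/- The dressing action formula (ρ(x,y,z,w))(p,q,r,s) = (eʷp - e^{-λr+w}η_λ(r)y, e⁻ʷq + e^{-λr-w}η_λ(r)x, r, s - e^{-λr}p·x + e^{-λr}q·y + e^{-2λr}η_λ(r)β(x,y)) defines a right action of the extended Heisenberg group H̃ on the set G̃ = ℝⁿ×ℝⁿ×ℝ×ℝ: ρ(h'h) = ρ(h)∘ρ(h') and ρ(e) = id. -/
noncomputable section

/-- The extended Heisenberg group multiplication on `H̃ = ℝⁿ × ℝⁿ × ℝ × ℝ`: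
`(x,y,z,w)(x',y',z',w') = (x+eʷx', y+e⁻ʷy', z+z'+e⁻ʷβ(x,y'), w+w')`. -/
def Htmul {n : ℕ} (a b : (Fin n → ℝ) × (Fin n → ℝ) × ℝ × ℝ) :
    (Fin n → ℝ) × (Fin n → ℝ) × ℝ × ℝ :=
  (a.1 + Real.exp a.2.2.2 • b.1,
   a.2.1 + Real.exp (-a.2.2.2) • b.2.1,
   a.2.2.1 + b.2.2.1 + Real.exp (-a.2.2.2) * beta a.1 b.2.1,
   a.2.2.2 + b.2.2.2)

/-- The dressing action formula of `H̃` on `G̃ = ℝⁿ×ℝⁿ×ℝ×ℝ`. -/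
def rhoHtGt {n : ℕ} (l : ℝ) (h : (Fin n → ℝ) × (Fin n → ℝ) × ℝ × ℝ)
    (g : (Fin n → ℝ) × (Fin n → ℝ) × ℝ × ℝ) :
    (Fin n → ℝ) × (Fin n → ℝ) × ℝ × ℝ :=
  (Real.exp h.2.2.2 • g.1
      - (Real.exp (-(l * g.2.2.1) + h.2.2.2) * eta l g.2.2.1) • h.2.1,
   Real.exp (-h.2.2.2) • g.2.1
      + (Real.exp (-(l * g.2.2.1) - h.2.2.2) * eta l g.2.2.1) • h.1,
   g.2.2.1,
   g.2.2.2 - Real.exp (-(l * g.2.2.1)) * beta g.1 h.1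
     + Real.exp (-(l * g.2.2.1)) * beta g.2.1 h.2.1
     + Real.exp (-(2 * (l * g.2.2.1))) * eta l g.2.2.1 * beta h.1 h.2.1)

/-!
The coordinate `r` is fixed by `ρ`, and for fixed `r` the map `ρ(h)` is affine in `(p, q, s)` with
coefficients built from `e^{±w}`, `e^{-λr}` and the number `η_λ(r)`. Composing two such maps and
comparing with `ρ(h'h)` therefore only uses bilinearity and symmetry of `β` and the
functional equation of `exp`.
-/

theorem beta_eq_dotProduct {n : ℕ} (x y : Fin n → ℝ) : beta x y = x ⬝ᵥ y := rfl

theorem rhoHtGt_Htmul {n : ℕ} (l : ℝ) (h h' g : (Fin n → ℝ) × (Fin n → ℝ) × ℝ × ℝ) :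
    rhoHtGt l (Htmul h' h) g = rhoHtGt l h (rhoHtGt l h' g) := by
  obtain ⟨x, y, -, w⟩ := h
  obtain ⟨x', y', -, w'⟩ := h'
  obtain ⟨p, q, r, s⟩ := g
  have hw' : Real.exp w' * Real.exp (-w') = 1 := by
    rw [← Real.exp_add, add_neg_cancel, Real.exp_zero]
  have hsq : Real.exp (-(2 * (l * r))) = Real.exp (-(l * r)) ^ 2 := by
    rw [← Real.exp_nat_mul]; push_cast; ring_nf
  simp only [rhoHtGt, Htmul, beta_eq_dotProduct, Prod.mk.injEq, true_and]
  simp only [sub_eq_add_neg (-(l * r)), neg_add, Real.exp_add, hsq, add_dotProduct, dotProduct_add,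
    sub_dotProduct, smul_dotProduct, dotProduct_smul, smul_eq_mul, dotProduct_comm y' x]
  refine ⟨?_, ?_, ?_⟩
  · linear_combination (norm := module) (-Real.exp (-(l * r)) * Real.exp w * eta l r) • hw' • y
  · linear_combination (norm := module) (Real.exp (-(l * r)) * Real.exp (-w) * eta l r) • hw' • x
  · linear_combination (Real.exp (-(l * r)) ^ 2 * eta l r * x ⬝ᵥ y) * hw'

theorem rhoHtGt_zero {n : ℕ} (l : ℝ) (g : (Fin n → ℝ) × (Fin n → ℝ) × ℝ × ℝ) :
    rhoHtGt l (0, 0, 0, 0) g = g := by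
  simp [rhoHtGt, beta_eq_dotProduct]

theorem stmt_11_general {n : ℕ} (l : ℝ) :
    (∀ h h' g : (Fin n → ℝ) × (Fin n → ℝ) × ℝ × ℝ,
        rhoHtGt l (Htmul h' h) g = rhoHtGt l h (rhoHtGt l h' g)) ∧
    (∀ g : (Fin n → ℝ) × (Fin n → ℝ) × ℝ × ℝ,
        rhoHtGt l ((0 : Fin n → ℝ), (0 : Fin n → ℝ), (0 : ℝ), (0 : ℝ)) g = g) :=
  ⟨rhoHtGt_Htmul l, rhoHtGt_zero l⟩

/-- The dressing action formula defines a right action of the extended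
Heisenberg group `H̃` on the set `G̃`: `ρ(h'h) = ρ(h)∘ρ(h')` and `ρ(e) = id`. -/
theorem stmt_11 {n : ℕ} (l : ℝ) (hl : l ≠ 0) :
    (∀ h h' g : (Fin n → ℝ) × (Fin n → ℝ) × ℝ × ℝ,
        rhoHtGt l (Htmul h' h) g = rhoHtGt l h (rhoHtGt l h' g)) ∧
    (∀ g : (Fin n → ℝ) × (Fin n → ℝ) × ℝ × ℝ,
        rhoHtGt l ((0 : Fin n → ℝ), (0 : Fin n → ℝ), (0 : ℝ), (0 : ℝ)) g = g) :=
  stmt_11_general l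
end
end
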